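/- The function $C(s,t) = \min(s,t) - st - \varphi(\Phi^{-1}(s))\,\varphi(\Phi^{-1}(t)) - \tfrac{1}{2} \Phi^{-1}(s)\,\varphi(\Phi^{-1}(s))\,\Phi^{-1}(t)\,\varphi(\Phi^{-1}(t))$, defined for $s, t \in (0,1)$, is symmetric: $C(s,t) = C(t,s)$, and satisfies $C(t,t) = t(1-t) - \varphi(\Phi^{-1}(t))^2 - \tfrac{1}{2}\left(\Phi^{-1}(t)\,\varphi(\Phi^{-1}(t))\right)^2 \ge 0$ for all $t \in (0,1)$. -/

import Mathlib

open MeasureTheory ProbabilityTheory Set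

/-- The standard normal distribution function. -/
noncomputable def stdNormalCDF (x : ℝ) : ℝ := ((gaussianReal 0 1) (Set.Iic x)).toReal

/-- The standard normal quantile function `Φ⁻¹`. -/
noncomputable def stdNormalQuantile : ℝ → ℝ := Function.invFun stdNormalCDF

/-- The standard normal density `φ`. -/
noncomputable def stdNormalPDF (x : ℝ) : ℝ := gaussianPDFReal 0 1 x

/-- The covariance function of Durbin's limiting Gaussian process for testing
normality with estimated mean and variance. -/
noncomputable def durbinCov (s t : ℝ) : ℝ :=
  min s t - s * t - stdNormalPDF (stdNormalQuantile s) * stdNormalPDF (stdNormalQuantile t) -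
    (1 / 2) * stdNormalQuantile s * stdNormalPDF (stdNormalQuantile s) *
      stdNormalQuantile t * stdNormalPDF (stdNormalQuantile t)

/-
Symmetry and the diagonal formula are algebra. With `x = Φ⁻¹ t`, nonnegativity of `C(t,t)`
is Bessel's inequality in `L²(φ)` for the centred indicator `𝟙{u ≤ x} - Φ x`, whose inner
products with the orthonormal Hermite polynomials `u` and `(u² - 1)/√2` are `-φ x` and
`-x φ x / √2`. The truncated Gaussian moments this needs follow from Stein's identity.
-/

open Real

lemma stdNormalPDF_eq : stdNormalPDF = fun x => (√(2 * π))⁻¹ * exp (-(1 / 2) * x ^ 2) := by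
  ext x
  simp only [stdNormalPDF, gaussianPDFReal, NNReal.coe_one, mul_one, sub_zero]
  ring_nf

lemma stdNormalPDF_nonneg (x : ℝ) : 0 ≤ stdNormalPDF x := gaussianPDFReal_nonneg _ _ _

lemma hasDerivAt_stdNormalPDF (x : ℝ) : HasDerivAt stdNormalPDF (-x * stdNormalPDF x) x := by
  rw [stdNormalPDF_eq]
  refine (((hasDerivAt_pow 2 x).const_mul (-(1 / 2) : ℝ)).exp.const_mul _).congr_deriv ?_
  push_cast
  ring

lemma integrable_pow_mul_stdNormalPDF (n : ℕ) :
    Integrable (fun u : ℝ => u ^ n * stdNormalPDF u) := by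
  have h := integrable_rpow_mul_exp_neg_mul_sq (by norm_num : (0 : ℝ) < 1 / 2)
    (by linarith [n.cast_nonneg (α := ℝ)] : (-1 : ℝ) < n)
  simp_rw [rpow_natCast] at h
  refine (h.const_mul (√(2 * π))⁻¹).congr (ae_of_all _ fun u => ?_)
  simp only [stdNormalPDF_eq]
  ring

lemma integrable_stdNormalPDF : Integrable stdNormalPDF := by
  simpa using integrable_pow_mul_stdNormalPDF 0

lemma integrable_sum_pow_mul_stdNormalPDF {N : ℕ} (a : Fin N → ℝ) :
    Integrable (fun u : ℝ => (∑ i, a i * u ^ (i : ℕ)) * stdNormalPDF u) := by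
  simp_rw [Finset.sum_mul, mul_assoc]
  exact integrable_finsetSum _ fun i _ => (integrable_pow_mul_stdNormalPDF i).const_mul (a i)

lemma setIntegral_sum_pow_mul_stdNormalPDF {N : ℕ} (a : Fin N → ℝ) (s : Set ℝ) :
    ∫ u in s, (∑ i, a i * u ^ (i : ℕ)) * stdNormalPDF u =
      ∑ i, a i * ∫ u in s, u ^ (i : ℕ) * stdNormalPDF u := by
  simp_rw [Finset.sum_mul, mul_assoc]
  rw [integral_finsetSum _ fun i _ =>
    ((integrable_pow_mul_stdNormalPDF _).const_mul _).integrableOn]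
  simp_rw [integral_const_mul]

lemma setIntegral_Iic_stdNormalPDF (x : ℝ) : ∫ u in Iic x, stdNormalPDF u = stdNormalCDF x := by
  rw [stdNormalCDF, gaussianReal_apply_eq_integral 0 one_ne_zero,
    ENNReal.toReal_ofReal
      (setIntegral_nonneg measurableSet_Iic fun u _ => gaussianPDFReal_nonneg 0 1 u)]
  rfl

lemma integral_stdNormalPDF : ∫ u, stdNormalPDF u = 1 :=
  integral_gaussianPDFReal_eq_one 0 one_ne_zero

lemma hasDerivAt_pow_mul_stdNormalPDF (n : ℕ) (x : ℝ) :
    HasDerivAt (fun u => u ^ n * stdNormalPDF u)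
      ((n * x ^ (n - 1) - x ^ (n + 1)) * stdNormalPDF x) x := by
  refine ((hasDerivAt_pow n x).fun_mul (hasDerivAt_stdNormalPDF x)).congr_deriv ?_
  ring

lemma integrable_deriv_pow_mul_stdNormalPDF (n : ℕ) :
    Integrable fun u : ℝ => (n * u ^ (n - 1) - u ^ (n + 1)) * stdNormalPDF u := by
  simp_rw [sub_mul, mul_assoc]
  exact ((integrable_pow_mul_stdNormalPDF _).const_mul _).sub (integrable_pow_mul_stdNormalPDF _)

/-- Stein's identity `E[Z q(Z)] = E[q'(Z)]` for `q = X ^ n`, truncated to `Z ≤ x`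
(for `n = 0` the truncated subtraction `n - 1` is harmless, its coefficient being `0`). -/
lemma setIntegral_Iic_pow_succ_mul_stdNormalPDF (n : ℕ) (x : ℝ) :
    ∫ u in Iic x, u ^ (n + 1) * stdNormalPDF u =
      n * (∫ u in Iic x, u ^ (n - 1) * stdNormalPDF u) - x ^ n * stdNormalPDF x := by
  have hderivInt := integrable_deriv_pow_mul_stdNormalPDF n
  have hderiv := fun u (_ : u ∈ Iic x) => hasDerivAt_pow_mul_stdNormalPDF n u
  have hftc := integral_Iic_of_hasDerivAt_of_tendsto' hderiv hderivInt.integrableOn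
    (tendsto_zero_of_hasDerivAt_of_integrableOn_Iic hderiv hderivInt.integrableOn
      (integrable_pow_mul_stdNormalPDF n).integrableOn)
  simp_rw [sub_mul, mul_assoc] at hftc
  rw [integral_sub ((integrable_pow_mul_stdNormalPDF _).const_mul _).integrableOn
    (integrable_pow_mul_stdNormalPDF _).integrableOn, integral_const_mul] at hftc
  linarith

lemma integral_pow_succ_mul_stdNormalPDF (n : ℕ) :
    ∫ u, u ^ (n + 1) * stdNormalPDF u = n * ∫ u, u ^ (n - 1) * stdNormalPDF u := by
  have hderivInt := integrable_deriv_pow_mul_stdNormalPDF n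
  have hzero := integral_eq_zero_of_hasDerivAt_of_integrable (hasDerivAt_pow_mul_stdNormalPDF n)
    hderivInt (integrable_pow_mul_stdNormalPDF n)
  simp_rw [sub_mul, mul_assoc] at hzero
  rw [integral_sub ((integrable_pow_mul_stdNormalPDF _).const_mul _)
    (integrable_pow_mul_stdNormalPDF _), integral_const_mul] at hzero
  linarith

lemma sq_quadratic_eq_sum (k c b u : ℝ) : (k + c * u + b * u ^ 2) ^ 2 =
    ∑ i : Fin 5, ![k ^ 2, 2 * k * c, c ^ 2 + 2 * k * b, 2 * c * b, b ^ 2] i * u ^ (i : ℕ) := by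
  simp only [Fin.sum_univ_five, Fin.isValue, Matrix.cons_val_zero, Matrix.cons_val_one,
    Matrix.cons_val, Fin.coe_ofNat_eq_mod, Nat.reduceMod, pow_zero, pow_one, mul_one]
  ring

lemma integrable_sq_quadratic_mul_stdNormalPDF (k c b : ℝ) :
    Integrable fun u => (k + c * u + b * u ^ 2) ^ 2 * stdNormalPDF u := by
  simpa only [sq_quadratic_eq_sum] using integrable_sum_pow_mul_stdNormalPDF _

lemma setIntegral_sq_quadratic_mul_stdNormalPDF (k c b : ℝ) (s : Set ℝ) :
    ∫ u in s, (k + c * u + b * u ^ 2) ^ 2 * stdNormalPDF u =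
      k ^ 2 * (∫ u in s, stdNormalPDF u) + 2 * k * c * (∫ u in s, u * stdNormalPDF u) +
        (c ^ 2 + 2 * k * b) * (∫ u in s, u ^ 2 * stdNormalPDF u) +
        2 * c * b * (∫ u in s, u ^ 3 * stdNormalPDF u) +
        b ^ 2 * ∫ u in s, u ^ 4 * stdNormalPDF u := by
  simp_rw [sq_quadratic_eq_sum]
  rw [setIntegral_sum_pow_mul_stdNormalPDF]
  simp [Fin.sum_univ_five]

/-- The difference of the two sides is the integral against `φ` of the square of the Bessel
residual `𝟙{u ≤ x} - Φ x + φ x * u + (x φ x / 2) (u² - 1)`. -/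
theorem stdNormalPDF_sq_add_le_stdNormalCDF_mul_one_sub (x : ℝ) :
    stdNormalPDF x ^ 2 + (1 / 2) * (x * stdNormalPDF x) ^ 2 ≤
      stdNormalCDF x * (1 - stdNormalCDF x) := by
  set P := stdNormalCDF x
  set p := stdNormalPDF x
  set b := x * p / 2
  have M0 : ∫ u in Iic x, stdNormalPDF u = P := setIntegral_Iic_stdNormalPDF x
  have M1 : ∫ u in Iic x, u * stdNormalPDF u = -p := by
    simpa using setIntegral_Iic_pow_succ_mul_stdNormalPDF 0 x
  have M2 : ∫ u in Iic x, u ^ 2 * stdNormalPDF u = P - x * p := by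
    simpa [setIntegral_Iic_stdNormalPDF] using setIntegral_Iic_pow_succ_mul_stdNormalPDF 1 x
  have M3 : ∫ u in Iic x, u ^ 3 * stdNormalPDF u = -2 * p - x ^ 2 * p := by
    rw [setIntegral_Iic_pow_succ_mul_stdNormalPDF 2 x]
    simp only [Nat.add_one_sub_one, pow_one, M1]
    push_cast; ring
  have M4 : ∫ u in Iic x, u ^ 4 * stdNormalPDF u = 3 * (P - x * p) - x ^ 3 * p := by
    rw [setIntegral_Iic_pow_succ_mul_stdNormalPDF 3 x, M2]; push_cast; ring
  have m0 : ∫ u, stdNormalPDF u = 1 := integral_stdNormalPDF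
  have m1 : ∫ u, u * stdNormalPDF u = 0 := by
    simpa using integral_pow_succ_mul_stdNormalPDF 0
  have m2 : ∫ u, u ^ 2 * stdNormalPDF u = 1 := by
    simpa [integral_stdNormalPDF] using integral_pow_succ_mul_stdNormalPDF 1
  have m3 : ∫ u, u ^ 3 * stdNormalPDF u = 0 := by
    rw [integral_pow_succ_mul_stdNormalPDF 2]
    simp only [Nat.add_one_sub_one, pow_one, m1, mul_zero]
  have m4 : ∫ u, u ^ 4 * stdNormalPDF u = 3 := by
    rw [integral_pow_succ_mul_stdNormalPDF 3, m2]; norm_num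
  have hIic : 0 ≤ ∫ u in Iic x, (1 - P - b + p * u + b * u ^ 2) ^ 2 * stdNormalPDF u :=
    setIntegral_nonneg measurableSet_Iic fun u _ => mul_nonneg (sq_nonneg _) (stdNormalPDF_nonneg u)
  have hIoi : 0 ≤ ∫ u in Ioi x, (-P - b + p * u + b * u ^ 2) ^ 2 * stdNormalPDF u :=
    setIntegral_nonneg measurableSet_Ioi fun u _ => mul_nonneg (sq_nonneg _) (stdNormalPDF_nonneg u)
  have hsplit := intervalIntegral.integral_Iic_add_Ioi (b := x)
    (integrable_sq_quadratic_mul_stdNormalPDF (-P - b) p b).integrableOn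
    (integrable_sq_quadratic_mul_stdNormalPDF (-P - b) p b).integrableOn
  have hfull := setIntegral_sq_quadratic_mul_stdNormalPDF (-P - b) p b univ
  simp only [Measure.restrict_univ, m0, m1, m2, m3, m4] at hfull
  rw [setIntegral_sq_quadratic_mul_stdNormalPDF, M0, M1, M2, M3, M4] at hIic hsplit
  simp only [b] at *
  linarith

lemma stdNormalCDF_eq_cdf : stdNormalCDF = cdf (gaussianReal 0 1) :=
  funext fun x => (cdf_eq_real _ x).symm

lemma continuous_stdNormalCDF : Continuous stdNormalCDF := by
  have hprim (x : ℝ) :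
      stdNormalCDF x = stdNormalCDF 0 + ∫ u in (0 : ℝ)..x, stdNormalPDF u := by
    rw [← intervalIntegral.integral_Iic_sub_Iic integrable_stdNormalPDF.integrableOn
      integrable_stdNormalPDF.integrableOn, setIntegral_Iic_stdNormalPDF,
      setIntegral_Iic_stdNormalPDF, add_sub_cancel]
  rw [funext hprim]
  exact continuous_const.add (integrable_stdNormalPDF.continuous_primitive 0)

lemma stdNormalCDF_stdNormalQuantile {t : ℝ} (ht : t ∈ Ioo (0 : ℝ) 1) :
    stdNormalCDF (stdNormalQuantile t) = t := by
  refine Function.invFun_eq (mem_range_of_exists_le_of_exists_ge continuous_stdNormalCDF ?_ ?_)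
  · rw [stdNormalCDF_eq_cdf]
    exact ((tendsto_cdf_atBot _).eventually_le_const ht.1).exists
  · rw [stdNormalCDF_eq_cdf]
    exact ((tendsto_cdf_atTop _).eventually_const_le ht.2).exists

lemma durbinCov_comm (s t : ℝ) : durbinCov s t = durbinCov t s := by
  simp only [durbinCov, min_comm s t]
  ring

lemma durbinCov_self (t : ℝ) :
    durbinCov t t = t * (1 - t) - stdNormalPDF (stdNormalQuantile t) ^ 2 -
      (1 / 2) * (stdNormalQuantile t * stdNormalPDF (stdNormalQuantile t)) ^ 2 := by
  simp only [durbinCov, min_self]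
  ring

/-- the covariance function `C` is symmetric, and on the diagonal
`C(t,t) = t(1-t) - φ(Φ⁻¹(t))² - (1/2)(Φ⁻¹(t) φ(Φ⁻¹(t)))² ≥ 0` for `t ∈ (0,1)`. -/
theorem statement11 :
    (∀ s t : ℝ, s ∈ Set.Ioo (0:ℝ) 1 → t ∈ Set.Ioo (0:ℝ) 1 → durbinCov s t = durbinCov t s) ∧
    (∀ t : ℝ, t ∈ Set.Ioo (0:ℝ) 1 →
      durbinCov t t = t * (1 - t) - stdNormalPDF (stdNormalQuantile t) ^ 2 -
        (1 / 2) * (stdNormalQuantile t * stdNormalPDF (stdNormalQuantile t)) ^ 2 ∧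
      0 ≤ durbinCov t t) := by
  refine ⟨fun s t _ _ => durbinCov_comm s t, fun t ht => ⟨durbinCov_self t, ?_⟩⟩
  have hbessel := stdNormalPDF_sq_add_le_stdNormalCDF_mul_one_sub (stdNormalQuantile t)
  rw [stdNormalCDF_stdNormalQuantile ht] at hbessel
  rw [durbinCov_self]
  linarith
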